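/- Fix real numbers a, b with 1 < a ≤ b. Then, as t tends to +∞: t·I₂(a,b;t) tends to ∫_{-a}^{-1} (1/√(z²−1))·√((b−z)/(a+z)) dz; t·J₂(a,b;t) tends to ∫_{-a}^{-1} (1/√(z²−1))·√((a+z)/(b−z)) dz; t·I₄(a,b;t) tends to ∫_{1}^{b} (1/√(z²−1))·√((b−z)/(a+z)) dz; and t·J₄(a,b;t) tends to ∫_{1}^{b} (1/√(z²−1))·√((a+z)/(b−z)) dz. -/

import Mathlib

/-!
For `t` large the factor `t / √(t² - z²)` tends to `1` and is bounded by `2` on a fixed interval,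
so the limits follow by dominated convergence as soon as the limit integrands are integrable. On
each interval `[c, d]` these integrands are continuous multiples of `((z - c) (d - z))^(-1/2)`,
which is integrable as an affine pullback of the Chebyshev weight `(1 - x²)^(-1/2)` on `[-1, 1]`.
-/

open MeasureTheory intervalIntegral Real Filter Topology

/-- Period integral `I₁`. -/
noncomputable def I1 (a b t : ℝ) : ℝ :=
  ∫ z in (-t)..(-a), Real.sqrt ((b - z) / ((t ^ 2 - z ^ 2) * (z ^ 2 - 1) * (-z - a)))

/-- Period integral `J₁`. -/
noncomputable def J1 (a b t : ℝ) : ℝ :=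
  ∫ z in (-t)..(-a), Real.sqrt ((-z - a) / ((t ^ 2 - z ^ 2) * (z ^ 2 - 1) * (b - z)))

/-- Period integral `I₂`. -/
noncomputable def I2 (a b t : ℝ) : ℝ :=
  ∫ z in (-a)..(-1), Real.sqrt ((b - z) / ((t ^ 2 - z ^ 2) * (z ^ 2 - 1) * (z + a)))

/-- Period integral `J₂`. -/
noncomputable def J2 (a b t : ℝ) : ℝ :=
  ∫ z in (-a)..(-1), Real.sqrt ((z + a) / ((t ^ 2 - z ^ 2) * (z ^ 2 - 1) * (b - z)))

/-- Period integral `I₄`. -/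
noncomputable def I4 (a b t : ℝ) : ℝ :=
  ∫ z in (1:ℝ)..b, Real.sqrt ((b - z) / ((t ^ 2 - z ^ 2) * (z ^ 2 - 1) * (z + a)))

/-- Period integral `J₄`. -/
noncomputable def J4 (a b t : ℝ) : ℝ :=
  ∫ z in (1:ℝ)..b, Real.sqrt ((z + a) / ((t ^ 2 - z ^ 2) * (z ^ 2 - 1) * (b - z)))

/-- Period integral `I₅`. -/
noncomputable def I5 (a b t : ℝ) : ℝ :=
  ∫ z in b..t, Real.sqrt ((z - b) / ((t ^ 2 - z ^ 2) * (z ^ 2 - 1) * (z + a)))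

/-- Period integral `J₅`. -/
noncomputable def J5 (a b t : ℝ) : ℝ :=
  ∫ z in b..t, Real.sqrt ((z + a) / ((t ^ 2 - z ^ 2) * (z ^ 2 - 1) * (z - b)))

/-- The period quotient `Q(a,b;t)`. -/
noncomputable def Q (a b t : ℝ) : ℝ :=
  (I1 a b t + I5 a b t) / (I2 a b t + I4 a b t)
    - (J1 a b t + J5 a b t) / (J2 a b t + J4 a b t)

open Set

theorem intervalIntegrable_inv_sqrt_mul_sub {c d : ℝ} (hcd : c < d) :
    IntervalIntegrable (fun z => (√((z - c) * (d - z)))⁻¹) volume c d := by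
  have hdc : 0 < d - c := sub_pos.mpr hcd
  have h := (Polynomial.Chebyshev.intervalIntegrable_sqrt_one_sub_sq_inv.comp_add_right
    (-(c + d) / (d - c))).comp_mul_left (c := 2 / (d - c))
  convert h.const_mul (2 / (d - c)) using 1
  · ext z
    have hx : 1 - (2 / (d - c) * z + -(c + d) / (d - c)) ^ 2 =
        (2 / (d - c)) ^ 2 * ((z - c) * (d - z)) := by
      field_simp
      ring
    rw [hx, sqrt_inv, sqrt_mul (sq_nonneg _), sqrt_sq (by positivity)]
    field_simp
  all_goals field_simp; ring

theorem tendsto_div_sqrt_sq_sub_sq (z : ℝ) :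
    Tendsto (fun t => t / √(t ^ 2 - z ^ 2)) atTop (𝓝 1) := by
  have h : Tendsto (fun t => (√(1 - z ^ 2 / t ^ 2))⁻¹) atTop (𝓝 1) := by
    simpa using (((tendsto_pow_atTop two_ne_zero).const_div_atTop (z ^ 2)).const_sub 1).sqrt.inv₀
      (by simp)
  refine h.congr' ?_
  filter_upwards [eventually_gt_atTop 0] with t ht
  rw [one_sub_div (by positivity), sqrt_div' _ (sq_nonneg t), sqrt_sq ht.le, inv_div]

theorem div_sqrt_sq_sub_sq_le_two {t z : ℝ} (h : 2 * |z| ≤ t) : t / √(t ^ 2 - z ^ 2) ≤ 2 := by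
  refine div_le_of_le_mul₀ (sqrt_nonneg _) zero_le_two ?_
  have hhalf : t / 2 ≤ √(t ^ 2 - z ^ 2) := le_sqrt_of_sq_le (by nlinarith [sq_abs z, abs_nonneg z])
  linarith

theorem abs_le_max_abs_abs_of_mem_uIcc {c d z : ℝ} (hz : z ∈ uIcc c d) : |z| ≤ max |c| |d| := by
  rcases mem_uIcc.mp hz with h | h
  · exact abs_le_max_abs_abs h.1 h.2
  · rw [max_comm]; exact abs_le_max_abs_abs h.1 h.2

theorem tendsto_mul_integral_sqrt_div_sq_sub_sq {F : ℝ → ℝ} {c d : ℝ}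
    (hF : IntervalIntegrable (fun z => √(F z)) volume c d) :
    Tendsto (fun t => t * ∫ z in c..d, √(F z / (t ^ 2 - z ^ 2))) atTop
      (𝓝 (∫ z in c..d, √(F z))) := by
  have hlarge : ∀ᶠ t in atTop, ∀ z ∈ uIcc c d, 2 * |z| ≤ t := by
    filter_upwards [eventually_ge_atTop (2 * max |c| |d|)] with t ht z hz
    linarith [abs_le_max_abs_abs_of_mem_uIcc hz]
  refine Tendsto.congr' (f₁ := fun t => ∫ z in c..d, √(F z) * (t / √(t ^ 2 - z ^ 2))) ?_ ?_
  · filter_upwards [hlarge] with t ht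
    rw [← intervalIntegral.integral_const_mul]
    refine integral_congr fun z hz => ?_
    have hzt : z ^ 2 ≤ t ^ 2 := by nlinarith [sq_abs z, abs_nonneg z, ht z hz]
    rw [sqrt_div' _ (sub_nonneg.mpr hzt)]
    ring
  refine tendsto_integral_filter_of_dominated_convergence (fun z => √(F z) * 2)
    (Eventually.of_forall fun t => hF.def'.aestronglyMeasurable.mul
      (by fun_prop : Measurable fun z => t / √(t ^ 2 - z ^ 2)).aestronglyMeasurable)
    ?_ (hF.mul_const 2) (ae_of_all _ fun z _ => ?_)
  · filter_upwards [hlarge] with t ht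
    refine ae_of_all _ fun z hz => ?_
    have hz' := ht z (uIoc_subset_uIcc hz)
    rw [norm_of_nonneg (mul_nonneg (sqrt_nonneg _) (div_nonneg (by linarith [abs_nonneg z])
      (sqrt_nonneg _)))]
    exact mul_le_mul_of_nonneg_left (div_sqrt_sq_sub_sq_le_two hz') (sqrt_nonneg _)
  · simpa using (tendsto_div_sqrt_sq_sub_sq z).const_mul (√(F z))

theorem intervalIntegrable_sqrt_of_eqOn_div_mul_sub {F G : ℝ → ℝ} {c d : ℝ} (hcd : c < d)
    (hG : ContinuousOn G (Icc c d))
    (hFG : EqOn F (fun z => G z / ((z - c) * (d - z))) (Ioo c d)) :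
    IntervalIntegrable (fun z => √(F z)) volume c d := by
  have h := (intervalIntegrable_inv_sqrt_mul_sub hcd).continuousOn_mul
    (hG.sqrt.mono (uIcc_of_le hcd.le).le)
  rw [intervalIntegrable_iff_integrableOn_Ioo_of_le hcd.le] at h ⊢
  refine h.congr_fun (fun z hz => ?_) measurableSet_Ioo
  have hpos : 0 ≤ (z - c) * (d - z) := mul_nonneg (by linarith [hz.1]) (by linarith [hz.2])
  rw [hFG hz, sqrt_div' _ hpos, div_eq_mul_inv]

theorem tendsto_mul_period_integral {P Q : ℝ → ℝ} {c d : ℝ}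
    (hsq : ∀ z ∈ uIcc c d, 1 ≤ z ^ 2)
    (hint : IntervalIntegrable (fun z => √(P z / Q z / (z ^ 2 - 1))) volume c d) :
    Tendsto (fun t => t * ∫ z in c..d, √(P z / ((t ^ 2 - z ^ 2) * (z ^ 2 - 1) * Q z))) atTop
      (𝓝 (∫ z in c..d, 1 / √(z ^ 2 - 1) * √(P z / Q z))) := by
  have hlim : ∫ z in c..d, √(P z / Q z / (z ^ 2 - 1)) =
      ∫ z in c..d, 1 / √(z ^ 2 - 1) * √(P z / Q z) :=
    integral_congr fun z hz => by
      rw [sqrt_div' _ (sub_nonneg.mpr (hsq z hz))]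
      ring
  have hI : ∀ t z, P z / ((t ^ 2 - z ^ 2) * (z ^ 2 - 1) * Q z) =
      P z / Q z / (z ^ 2 - 1) / (t ^ 2 - z ^ 2) := fun t z => by
    rw [div_div, div_div]
    congr 1
    ring
  simp_rw [hI, ← hlim]
  exact tendsto_mul_integral_sqrt_div_sq_sub_sq hint

theorem tendsto_mul_I2 {a b : ℝ} (ha : 1 < a) :
    Tendsto (fun t => t * I2 a b t) atTop
      (𝓝 (∫ z in (-a)..(-1), (1 / √(z ^ 2 - 1)) * √((b - z) / (a + z)))) := by
  have hsq : ∀ z ∈ uIcc (-a) (-1), 1 ≤ z ^ 2 := fun z hz => by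
    rw [uIcc_of_le (by linarith)] at hz
    nlinarith [hz.2]
  have hint := intervalIntegrable_sqrt_of_eqOn_div_mul_sub (c := -a) (d := -1)
    (F := fun z => (b - z) / (z + a) / (z ^ 2 - 1)) (G := fun z => (b - z) / (1 - z))
    (by linarith) (ContinuousOn.div (by fun_prop) (by fun_prop) fun z hz => by linarith [hz.2])
    (fun z _ => by
      simp only [sub_neg_eq_add, div_div]
      congr 1
      ring)
  simpa only [I2, add_comm a] using tendsto_mul_period_integral hsq hint

theorem tendsto_mul_J2 {a b : ℝ} (ha : 1 < a) (hab : a ≤ b) :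
    Tendsto (fun t => t * J2 a b t) atTop
      (𝓝 (∫ z in (-a)..(-1), (1 / √(z ^ 2 - 1)) * √((a + z) / (b - z)))) := by
  have hsq : ∀ z ∈ uIcc (-a) (-1), 1 ≤ z ^ 2 := fun z hz => by
    rw [uIcc_of_le (by linarith)] at hz
    nlinarith [hz.2]
  have hint := intervalIntegrable_sqrt_of_eqOn_div_mul_sub (c := -a) (d := -1)
    (F := fun z => (z + a) / (b - z) / (z ^ 2 - 1))
    (G := fun z => (z + a) ^ 2 / ((1 - z) * (b - z)))
    (by linarith) (ContinuousOn.div (by fun_prop) (by fun_prop) fun z hz =>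
      mul_ne_zero (by linarith [hz.2]) (by linarith [hz.2]))
    (fun z hz => by
      have hza : z + a ≠ 0 := by linarith [hz.1]
      simp only [sub_neg_eq_add, div_div]
      rw [← mul_div_mul_right (z + a) _ hza]
      congr 1 <;> ring)
  simpa only [J2, add_comm a] using tendsto_mul_period_integral hsq hint

theorem tendsto_mul_I4 {a b : ℝ} (ha : 1 < a) (hab : a ≤ b) :
    Tendsto (fun t => t * I4 a b t) atTop
      (𝓝 (∫ z in (1 : ℝ)..b, (1 / √(z ^ 2 - 1)) * √((b - z) / (a + z)))) := by
  have hsq : ∀ z ∈ uIcc 1 b, 1 ≤ z ^ 2 := fun z hz => by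
    rw [uIcc_of_le (by linarith)] at hz
    nlinarith [hz.1]
  have hint := intervalIntegrable_sqrt_of_eqOn_div_mul_sub (c := 1) (d := b)
    (F := fun z => (b - z) / (z + a) / (z ^ 2 - 1))
    (G := fun z => (b - z) ^ 2 / ((z + a) * (z + 1)))
    (by linarith) (ContinuousOn.div (by fun_prop) (by fun_prop) fun z hz =>
      mul_ne_zero (by linarith [hz.1]) (by linarith [hz.1]))
    (fun z hz => by
      have hbz : b - z ≠ 0 := by linarith [hz.2]
      simp only [div_div]
      rw [← mul_div_mul_right (b - z) _ hbz]
      congr 1 <;> ring)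
  simpa only [I4, add_comm a] using tendsto_mul_period_integral hsq hint

theorem tendsto_mul_J4 {a b : ℝ} (ha : 1 < a) (hab : a ≤ b) :
    Tendsto (fun t => t * J4 a b t) atTop
      (𝓝 (∫ z in (1 : ℝ)..b, (1 / √(z ^ 2 - 1)) * √((a + z) / (b - z)))) := by
  have hsq : ∀ z ∈ uIcc 1 b, 1 ≤ z ^ 2 := fun z hz => by
    rw [uIcc_of_le (by linarith)] at hz
    nlinarith [hz.1]
  have hint := intervalIntegrable_sqrt_of_eqOn_div_mul_sub (c := 1) (d := b)
    (F := fun z => (z + a) / (b - z) / (z ^ 2 - 1)) (G := fun z => (z + a) / (z + 1))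
    (by linarith) (ContinuousOn.div (by fun_prop) (by fun_prop) fun z hz => by linarith [hz.1])
    (fun z _ => by
      simp only [div_div]
      congr 1
      ring)
  simpa only [J4, add_comm a] using tendsto_mul_period_integral hsq hint

/-- Limits of the rescaled period integrals `t·I₂`, `t·J₂`, `t·I₄`, `t·J₄` as `t → ∞`. -/
theorem stmt7 (a b : ℝ) (ha : 1 < a) (hab : a ≤ b) :
    Tendsto (fun t : ℝ => t * I2 a b t) atTop
      (𝓝 (∫ z in (-a)..(-1),
        (1 / Real.sqrt (z ^ 2 - 1)) * Real.sqrt ((b - z) / (a + z)))) ∧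
    Tendsto (fun t : ℝ => t * J2 a b t) atTop
      (𝓝 (∫ z in (-a)..(-1),
        (1 / Real.sqrt (z ^ 2 - 1)) * Real.sqrt ((a + z) / (b - z)))) ∧
    Tendsto (fun t : ℝ => t * I4 a b t) atTop
      (𝓝 (∫ z in (1:ℝ)..b,
        (1 / Real.sqrt (z ^ 2 - 1)) * Real.sqrt ((b - z) / (a + z)))) ∧
    Tendsto (fun t : ℝ => t * J4 a b t) atTop
      (𝓝 (∫ z in (1:ℝ)..b,
        (1 / Real.sqrt (z ^ 2 - 1)) * Real.sqrt ((a + z) / (b - z)))) :=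
  ⟨tendsto_mul_I2 ha, tendsto_mul_J2 ha hab, tendsto_mul_I4 ha hab, tendsto_mul_J4 ha hab⟩
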